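/- arXiv:1708.06374 — 4 statements merged into one kernel-verified Lean document; each statement's English description precedes it below -/
import Mathlib

section
/- Under the kinematics of Lemma 'safe distance': define the rear car's position r(t) as: r(t) = v_r·t + a_acc·t²/2 for t ∈ [0,ρ], then braking at rate a_min from velocity v_ρ = v_r + ρ·a_acc until stopping; define front car's position f(t) = d_0 + v_f·t − a_max·t²/2 until it stops at time v_f/a_max, constant thereafter. If at some time t* the two cars have equal velocity, then for all t ≥ t*, the rear car's velocity is at least the front car's velocity, and hence the gap f(t) − r(t) is non-increasing on [t*, ∞). -/
/-!
After the crossing time `t*` the front car decelerates at rate `a_max` until it stops, while the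
rear car's velocity never drops faster than `a_min < a_max` and stays nonnegative. Starting from
equal velocities at `t*`, the rear velocity therefore dominates the front one on `[t*, ∞)`, and
integrating this inequality shows that the gap `f - r` can only shrink.
-/

open Set intervalIntegral MeasureTheory

noncomputable def brakingVelocity (v a t : ℝ) : ℝ := max 0 (v - a * t)

noncomputable def rearVelocity (v_r ρ a_acc a_min t : ℝ) : ℝ :=
  if t ≤ ρ then v_r + a_acc * t else brakingVelocity (v_r + ρ * a_acc) a_min (t - ρ)

section Braking

variable {v a t : ℝ}

theorem continuous_brakingVelocity (v a : ℝ) : Continuous (brakingVelocity v a) :=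
  continuous_const.max (continuous_const.sub (continuous_const.mul continuous_id))

theorem brakingVelocity_nonneg : 0 ≤ brakingVelocity v a t := le_max_left _ _

theorem brakingVelocity_zero_time : brakingVelocity v a 0 = max 0 v := by
  simp [brakingVelocity]

theorem brakingVelocity_eq_brakingVelocity_sub {s : ℝ} (ha : 0 ≤ a) (hst : s ≤ t) :
    brakingVelocity v a t = brakingVelocity (brakingVelocity v a s) a (t - s) := by
  unfold brakingVelocity
  rcases le_total (v - a * s) 0 with hs | hs
  · have : v - a * t ≤ 0 := by nlinarith
    rw [max_eq_left hs, max_eq_left this, max_eq_left (by nlinarith)]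
  · rw [max_eq_right hs]
    ring_nf

theorem brakingVelocity_le_brakingVelocity {v' a' : ℝ} (hv : v ≤ v') (ha : a' ≤ a)
    (ht : 0 ≤ t) :
    brakingVelocity v a t ≤ brakingVelocity v' a' t := by
  unfold brakingVelocity
  gcongr

end Braking

section Rear

variable {v_r ρ a_acc a_min : ℝ}

theorem continuous_rearVelocity (hv_r : 0 ≤ v_r) (hρ : 0 ≤ ρ) (ha_acc : 0 ≤ a_acc) :
    Continuous (rearVelocity v_r ρ a_acc a_min) := by
  refine Continuous.if_le (by fun_prop)
    ((continuous_brakingVelocity _ _).comp (continuous_id.sub continuous_const))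
    continuous_id continuous_const fun t ht => ?_
  simp only [ht, sub_self, brakingVelocity_zero_time]
  rw [max_eq_right (by positivity)]
  ring

theorem rearVelocity_nonneg {t : ℝ} (hv_r : 0 ≤ v_r) (ha_acc : 0 ≤ a_acc) (ht : 0 ≤ t) :
    0 ≤ rearVelocity v_r ρ a_acc a_min t := by
  unfold rearVelocity
  split_ifs
  · positivity
  · exact brakingVelocity_nonneg

theorem rearVelocity_sub_le {s t : ℝ} (ha_acc : 0 ≤ a_acc) (ha_min : 0 ≤ a_min)
    (hst : s ≤ t) :
    rearVelocity v_r ρ a_acc a_min s - a_min * (t - s) ≤ rearVelocity v_r ρ a_acc a_min t := by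
  unfold rearVelocity brakingVelocity
  split_ifs with hs ht ht
  · nlinarith
  · exact le_max_of_le_right (by nlinarith)
  · linarith
  · rcases le_total (v_r + ρ * a_acc - a_min * (s - ρ)) 0 with h | h
    · rw [max_eq_left h]
      exact le_max_of_le_left (by nlinarith)
    · rw [max_eq_right h]
      exact le_max_of_le_right (le_of_eq (by ring))

theorem brakingVelocity_rearVelocity_le {s t : ℝ} (hv_r : 0 ≤ v_r) (ha_acc : 0 ≤ a_acc)
    (ha_min : 0 ≤ a_min) (hs : 0 ≤ s) (hst : s ≤ t) :
    brakingVelocity (rearVelocity v_r ρ a_acc a_min s) a_min (t - s) ≤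
      rearVelocity v_r ρ a_acc a_min t :=
  max_le (rearVelocity_nonneg hv_r ha_acc (hs.trans hst)) (rearVelocity_sub_le ha_acc ha_min hst)

end Rear

theorem antitoneOn_add_integral_sub_integral {g h : ℝ → ℝ} {a : ℝ} (c : ℝ)
    (hg : Continuous g) (hh : Continuous h) (hle : ∀ t, a ≤ t → h t ≤ g t) :
    AntitoneOn (fun t => (c + ∫ s in (0:ℝ)..t, h s) - ∫ s in (0:ℝ)..t, g s) (Ici a) := by
  intro s hs t _ hst
  have hint : ∫ u in s..t, h u ≤ ∫ u in s..t, g u :=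
    integral_mono_on hst (hh.intervalIntegrable _ _) (hg.intervalIntegrable _ _)
      fun u hu => hle u (le_trans hs hu.1)
  have split_h := integral_interval_sub_left (μ := volume)
    (hh.intervalIntegrable 0 t) (hh.intervalIntegrable 0 s)
  have split_g := integral_interval_sub_left (μ := volume)
    (hg.intervalIntegrable 0 t) (hg.intervalIntegrable 0 s)
  dsimp only
  linarith

theorem velocity_crossing_gap_antitone_general (v_r v_f ρ a_acc a_min a_max d_0 tstar : ℝ)
    (hvr : 0 ≤ v_r) (hρ : 0 < ρ)
    (hacc : 0 < a_acc) (hmin : 0 < a_min) (hlt : a_min < a_max)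
    (vR : ℝ → ℝ) (vF : ℝ → ℝ) (r f : ℝ → ℝ)
    (hvR : vR = fun t => if t ≤ ρ then v_r + a_acc * t
        else max 0 (v_r + ρ * a_acc - a_min * (t - ρ)))
    (hvF : vF = fun t => max 0 (v_f - a_max * t))
    (hr : r = fun t => ∫ s in (0:ℝ)..t, vR s)
    (hf : f = fun t => d_0 + ∫ s in (0:ℝ)..t, vF s)
    (htstar : 0 ≤ tstar) (hcross : vR tstar = vF tstar) :
    (∀ t, tstar ≤ t → vR t ≥ vF t) ∧ AntitoneOn (fun t => f t - r t) (Ici tstar) := by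
  change vR = rearVelocity v_r ρ a_acc a_min at hvR
  change vF = brakingVelocity v_f a_max at hvF
  subst hvR hvF hr hf
  have hdom : ∀ t, tstar ≤ t →
      brakingVelocity v_f a_max t ≤ rearVelocity v_r ρ a_acc a_min t := fun t ht =>
    calc brakingVelocity v_f a_max t
        = brakingVelocity (rearVelocity v_r ρ a_acc a_min tstar) a_max (t - tstar) := by
          rw [hcross]
          exact brakingVelocity_eq_brakingVelocity_sub (hmin.trans hlt).le ht
      _ ≤ brakingVelocity (rearVelocity v_r ρ a_acc a_min tstar) a_min (t - tstar) :=
          brakingVelocity_le_brakingVelocity le_rfl hlt.le (sub_nonneg.mpr ht)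
      _ ≤ rearVelocity v_r ρ a_acc a_min t :=
          brakingVelocity_rearVelocity_le hvr hacc.le hmin.le htstar ht
  exact ⟨hdom, antitoneOn_add_integral_sub_integral d_0
    (continuous_rearVelocity hvr hρ.le hacc.le) (continuous_brakingVelocity _ _) hdom⟩

/-- After a time `t*` where the rear and front cars have equal velocity, the rear car's
velocity dominates the front car's, and the gap `f - r` is non-increasing on `[t*, ∞)`. -/
theorem velocity_crossing_gap_antitone (v_r v_f ρ a_acc a_min a_max d_0 tstar : ℝ)
    (hvr : 0 ≤ v_r) (hvf : 0 ≤ v_f) (hρ : 0 < ρ)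
    (hacc : 0 < a_acc) (hmin : 0 < a_min) (hlt : a_min < a_max)
    (vR : ℝ → ℝ) (vF : ℝ → ℝ) (r f : ℝ → ℝ)
    (hvR : vR = fun t => if t ≤ ρ then v_r + a_acc * t
        else max 0 (v_r + ρ * a_acc - a_min * (t - ρ)))
    (hvF : vF = fun t => max 0 (v_f - a_max * t))
    (hr : r = fun t => ∫ s in (0:ℝ)..t, vR s)
    (hf : f = fun t => d_0 + ∫ s in (0:ℝ)..t, vF s)
    (htstar : 0 ≤ tstar) (hcross : vR tstar = vF tstar) :
    (∀ t, tstar ≤ t → vR t ≥ vF t) ∧ AntitoneOn (fun t => f t - r t) (Ici tstar) :=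
  velocity_crossing_gap_antitone_general v_r v_f ρ a_acc a_min a_max d_0 tstar hvr hρ hacc hmin hlt
    vR vF r f hvR hvF hr hf htstar hcross
end

section
/- The worst-case (minimal) gap between the front and rear cars over all time occurs either at time 0 or after both cars have reached a full stop. Formally, with r(t), f(t) as above, inf_{t ≥ 0} (f(t) − r(t)) = min( f(0) − r(0), lim_{t→∞} (f(t) − r(t)) ). -/
/-!
The gap `f - r` has derivative `h = vF - vR`. Once the front car is no faster than the rear
car it stays so: the front car decelerates at rate `a_max`, faster than the rate `a_min` at which
the rear car can lose speed at most. Hence `h` changes sign at most once, from positive to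
nonpositive, so the gap first grows and then shrinks, and its minimum over `[0, T]` is attained
at `0` or at `T`. Past the time `T` at which both cars have stopped the gap is constant, equal
to the value `L` given by the stopping distances.
-/

open Set Filter intervalIntegral

theorem integral_eq_of_forall_ge_eq_zero {h : ℝ → ℝ} (hc : Continuous h) {T : ℝ}
    (hzero : ∀ t, T ≤ t → h t = 0) (a : ℝ) {t : ℝ} (ht : T ≤ t) :
    ∫ s in a..t, h s = ∫ s in a..T, h s := by
  have htail : ∫ s in T..t, h s = 0 := by
    rw [integral_congr (g := fun _ => (0 : ℝ)) fun u hu => hzero u (uIcc_of_le ht ▸ hu).1]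
    simp
  rw [← integral_add_adjacent_intervals (hc.intervalIntegrable a T) (hc.intervalIntegrable T t),
    htail, add_zero]

theorem min_zero_integral_le_integral {h : ℝ → ℝ} (hc : Continuous h) {a : ℝ}
    (hsign : ∀ s t, a ≤ s → s ≤ t → h s ≤ 0 → h t ≤ 0) {t T : ℝ} (ht : a ≤ t) (htT : t ≤ T) :
    min 0 (∫ s in a..T, h s) ≤ ∫ s in a..t, h s := by
  rcases le_or_gt (h t) 0 with hneg | hpos
  · have htail : ∫ s in t..T, h s ≤ 0 := by
      simpa using integral_mono_on (g := fun _ => 0) htT (hc.intervalIntegrable t T)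
        intervalIntegrable_const fun u hu => hsign t u ht hu.1 hneg
    rw [← integral_add_adjacent_intervals (hc.intervalIntegrable a t) (hc.intervalIntegrable t T)]
    exact (min_le_right _ _).trans (by linarith)
  · have hnonneg : 0 ≤ ∫ s in a..t, h s :=
      integral_nonneg ht fun u hu => not_lt.1 fun hu' => (hsign u t hu.1 hu.2 hu'.le).not_gt hpos
    exact (min_le_left _ _).trans hnonneg

theorem isLeast_image_Ici_of_nonpos_persists {G h : ℝ → ℝ} {c T : ℝ} (hc : Continuous h)
    (hsign : ∀ s t, 0 ≤ s → s ≤ t → h s ≤ 0 → h t ≤ 0) (hT : 0 ≤ T)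
    (hG : ∀ t, G t = c + ∫ s in (0 : ℝ)..t, h s) (hconst : ∀ t, T ≤ t → G t = G T) :
    IsLeast (G '' Ici 0) (min (G 0) (G T)) := by
  refine ⟨?_, ?_⟩
  · rcases min_choice (G 0) (G T) with hmin | hmin
    · exact ⟨0, self_mem_Ici, hmin.symm⟩
    · exact ⟨T, hT, hmin.symm⟩
  · rintro _ ⟨t, ht, rfl⟩
    rcases le_total T t with hTt | htT
    · rw [hconst t hTt]
      exact min_le_right _ _
    · have hG0 : G 0 = c + 0 := by rw [hG, integral_same]
      rw [hG0, hG T, hG t, min_add_add_left]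
      linarith [min_zero_integral_le_integral hc hsign ht htT]

section Braking

variable {v a : ℝ}

def brakingSpeed (v a t : ℝ) : ℝ := max 0 (v - a * t)

theorem continuous_brakingSpeed (v a : ℝ) : Continuous (brakingSpeed v a) := by
  unfold brakingSpeed
  fun_prop

theorem brakingSpeed_nonneg (v a t : ℝ) : 0 ≤ brakingSpeed v a t := le_max_left _ _

theorem brakingSpeed_eq_zero (ha : 0 < a) {t : ℝ} (ht : v / a ≤ t) : brakingSpeed v a t = 0 := by
  rw [div_le_iff₀ ha] at ht
  exact max_eq_left (by linarith)

theorem brakingSpeed_eq_sub (ha : 0 < a) {t : ℝ} (ht : t ≤ v / a) :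
    brakingSpeed v a t = v - a * t := by
  rw [le_div_iff₀ ha] at ht
  exact max_eq_right (by linarith)

theorem brakingSpeed_sub_mul_le (ha : 0 ≤ a) {s t : ℝ} (hst : s ≤ t) :
    brakingSpeed v a s - a * (t - s) ≤ brakingSpeed v a t := by
  have hdrop : 0 ≤ a * (t - s) := mul_nonneg ha (sub_nonneg.2 hst)
  unfold brakingSpeed
  refine sub_le_iff_le_add.2 (max_le ?_ ?_)
  · linarith [le_max_left 0 (v - a * t)]
  · linarith [le_max_right 0 (v - a * t)]

theorem brakingSpeed_le_of_le_of_sub_mul_le {w : ℝ → ℝ} {b s t : ℝ} (hba : b ≤ a) (hst : s ≤ t)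
    (hle : brakingSpeed v a s ≤ w s) (hdecel : w s - b * (t - s) ≤ w t) (hw : 0 ≤ w t) :
    brakingSpeed v a t ≤ w t := by
  have hslower : b * (t - s) ≤ a * (t - s) := mul_le_mul_of_nonneg_right hba (sub_nonneg.2 hst)
  unfold brakingSpeed at hle ⊢
  refine max_le hw ?_
  linarith [le_max_right 0 (v - a * s)]

theorem integral_brakingSpeed (hv : 0 ≤ v) (ha : 0 < a) {t : ℝ} (ht : v / a ≤ t) :
    ∫ s in (0 : ℝ)..t, brakingSpeed v a s = v ^ 2 / (2 * a) := by
  have hstop : 0 ≤ v / a := div_nonneg hv ha.le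
  rw [integral_eq_of_forall_ge_eq_zero (continuous_brakingSpeed v a)
      (fun _ => brakingSpeed_eq_zero ha) 0 ht,
    integral_congr fun s hs => brakingSpeed_eq_sub ha (uIcc_of_le hstop ▸ hs).2,
    integral_sub intervalIntegrable_const (intervalIntegrable_id.const_mul a),
    integral_const, integral_const_mul, integral_id, smul_eq_mul]
  field_simp
  ring

end Braking

section Rear

variable {v a_acc ρ b : ℝ}

noncomputable def rearSpeed (v a_acc ρ b t : ℝ) : ℝ :=
  if t ≤ ρ then v + a_acc * t else brakingSpeed (v + ρ * a_acc) b (t - ρ)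

theorem rearSpeed_of_le {t : ℝ} (ht : t ≤ ρ) : rearSpeed v a_acc ρ b t = v + a_acc * t :=
  if_pos ht

theorem rearSpeed_of_ge (hv : 0 ≤ v + ρ * a_acc) {t : ℝ} (ht : ρ ≤ t) :
    rearSpeed v a_acc ρ b t = brakingSpeed (v + ρ * a_acc) b (t - ρ) := by
  rcases ht.lt_or_eq with hlt | rfl
  · exact if_neg hlt.not_ge
  · rw [rearSpeed_of_le le_rfl, sub_self, brakingSpeed, mul_zero, sub_zero, max_eq_right hv,
      mul_comm]

theorem continuous_rearSpeed (hv : 0 ≤ v + ρ * a_acc) : Continuous (rearSpeed v a_acc ρ b) := by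
  refine Continuous.if_le (by fun_prop) ((continuous_brakingSpeed _ _).comp (by fun_prop))
    continuous_id continuous_const fun t ht => ?_
  rw [← rearSpeed_of_le (b := b) ht.le, rearSpeed_of_ge hv ht.ge]

theorem rearSpeed_nonneg (hv : 0 ≤ v) (hacc : 0 ≤ a_acc) {t : ℝ} (ht : 0 ≤ t) :
    0 ≤ rearSpeed v a_acc ρ b t := by
  unfold rearSpeed
  split_ifs
  · positivity
  · exact brakingSpeed_nonneg _ _ _

theorem rearSpeed_sub_mul_le (hv : 0 ≤ v + ρ * a_acc) (hacc : 0 ≤ a_acc) (hb : 0 ≤ b)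
    {s t : ℝ} (hst : s ≤ t) : rearSpeed v a_acc ρ b s - b * (t - s) ≤ rearSpeed v a_acc ρ b t := by
  have hbefore : ∀ s t, s ≤ t → t ≤ ρ →
      rearSpeed v a_acc ρ b s - b * (t - s) ≤ rearSpeed v a_acc ρ b t := by
    intro s t hst ht
    rw [rearSpeed_of_le (hst.trans ht), rearSpeed_of_le ht]
    linarith [mul_nonneg hacc (sub_nonneg.2 hst), mul_nonneg hb (sub_nonneg.2 hst)]
  have hafter : ∀ s t, ρ ≤ s → s ≤ t →
      rearSpeed v a_acc ρ b s - b * (t - s) ≤ rearSpeed v a_acc ρ b t := by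
    intro s t hs hst
    rw [rearSpeed_of_ge hv hs, rearSpeed_of_ge hv (hs.trans hst)]
    have := brakingSpeed_sub_mul_le (v := v + ρ * a_acc) hb (sub_le_sub_right hst ρ)
    rwa [sub_sub_sub_cancel_right] at this
  rcases le_total t ρ with htρ | hρt
  · exact hbefore s t hst htρ
  rcases le_total ρ s with hρs | hsρ
  · exact hafter s t hρs hst
  · linarith [hbefore s ρ hsρ le_rfl, hafter ρ t le_rfl hρt]

theorem integral_rearSpeed (hv : 0 ≤ v) (hacc : 0 ≤ a_acc) (hρ : 0 ≤ ρ) (hb : 0 < b) {t : ℝ}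
    (ht : ρ + (v + ρ * a_acc) / b ≤ t) :
    ∫ s in (0 : ℝ)..t, rearSpeed v a_acc ρ b s =
      v * ρ + a_acc * ρ ^ 2 / 2 + (v + ρ * a_acc) ^ 2 / (2 * b) := by
  have hv₁ : 0 ≤ v + ρ * a_acc := by positivity
  have hρt : ρ ≤ t := le_of_add_le_of_nonneg_left ht (div_nonneg hv₁ hb.le)
  have hc := continuous_rearSpeed (b := b) hv₁
  have hresponse : ∫ s in (0 : ℝ)..ρ, rearSpeed v a_acc ρ b s = v * ρ + a_acc * ρ ^ 2 / 2 := by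
    rw [integral_congr fun s hs => rearSpeed_of_le (uIcc_of_le hρ ▸ hs).2,
      integral_add intervalIntegrable_const (intervalIntegrable_id.const_mul a_acc),
      integral_const, integral_const_mul, integral_id]
    simp only [smul_eq_mul]
    ring
  have hbraking : ∫ s in ρ..t, rearSpeed v a_acc ρ b s = (v + ρ * a_acc) ^ 2 / (2 * b) := by
    rw [integral_congr fun s hs => rearSpeed_of_ge hv₁ (uIcc_of_le hρt ▸ hs).1,
      integral_comp_sub_right (fun s => brakingSpeed (v + ρ * a_acc) b s), sub_self]
    exact integral_brakingSpeed hv₁ hb (by linarith)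
  rw [← integral_add_adjacent_intervals (hc.intervalIntegrable 0 ρ) (hc.intervalIntegrable ρ t),
    hresponse, hbraking]

end Rear

/-- The worst-case gap between the front and rear cars occurs either at time `0`
or in the limit after both cars have stopped. -/
theorem worst_case_gap_at_zero_or_limit (v_r v_f ρ a_acc a_min a_max d_0 : ℝ)
    (hvr : 0 ≤ v_r) (hvf : 0 ≤ v_f) (hρ : 0 < ρ)
    (hacc : 0 ≤ a_acc) (hmin : 0 < a_min) (hlt : a_min < a_max)
    (vR : ℝ → ℝ) (vF : ℝ → ℝ) (r f : ℝ → ℝ) (L : ℝ)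
    (hvR : vR = fun t => if t ≤ ρ then v_r + a_acc * t
        else max 0 (v_r + ρ * a_acc - a_min * (t - ρ)))
    (hvF : vF = fun t => max 0 (v_f - a_max * t))
    (hr : r = fun t => ∫ s in (0:ℝ)..t, vR s)
    (hf : f = fun t => d_0 + ∫ s in (0:ℝ)..t, vF s)
    (hL : L = d_0 + v_f ^ 2 / (2 * a_max) -
        (v_r * ρ + a_acc * ρ ^ 2 / 2 + (v_r + ρ * a_acc) ^ 2 / (2 * a_min))) :
    Tendsto (fun t => f t - r t) atTop (nhds L) ∧
      sInf ((fun t => f t - r t) '' Ici (0:ℝ)) = min (f 0 - r 0) L := by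
  obtain rfl : vF = brakingSpeed v_f a_max := hvF
  obtain rfl : vR = rearSpeed v_r a_acc ρ a_min := hvR
  have hv₁ : 0 ≤ v_r + ρ * a_acc := by positivity
  have ha_max : 0 < a_max := hmin.trans hlt
  set T := max (v_f / a_max) (ρ + (v_r + ρ * a_acc) / a_min)
  have hT : 0 ≤ T := (div_nonneg hvf ha_max.le).trans (le_max_left _ _)
  have hcF := continuous_brakingSpeed v_f a_max
  have hcR := continuous_rearSpeed (b := a_min) hv₁
  have hgap : ∀ t, f t - r t = d_0 + ∫ s in (0 : ℝ)..t,
      (brakingSpeed v_f a_max s - rearSpeed v_r a_acc ρ a_min s) := by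
    intro t
    simp only [hf, hr]
    rw [integral_sub (hcF.intervalIntegrable 0 t) (hcR.intervalIntegrable 0 t)]
    ring
  have hstopped : ∀ t, T ≤ t → f t - r t = L := by
    intro t ht
    simp only [hf, hr]
    rw [hL, integral_brakingSpeed hvf ha_max ((le_max_left _ _).trans ht),
      integral_rearSpeed hvr hacc hρ.le hmin ((le_max_right _ _).trans ht)]
  have hsign : ∀ s t, 0 ≤ s → s ≤ t →
      brakingSpeed v_f a_max s - rearSpeed v_r a_acc ρ a_min s ≤ 0 →
      brakingSpeed v_f a_max t - rearSpeed v_r a_acc ρ a_min t ≤ 0 := by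
    intro s t hs hst hle
    exact sub_nonpos.2 (brakingSpeed_le_of_le_of_sub_mul_le hlt.le hst (sub_nonpos.1 hle)
      (rearSpeed_sub_mul_le hv₁ hacc hmin.le hst) (rearSpeed_nonneg hvr hacc (hs.trans hst)))
  have hleast := isLeast_image_Ici_of_nonpos_persists (hcF.sub hcR) hsign hT hgap
    fun t ht => (hstopped t ht).trans (hstopped T le_rfl).symm
  rw [hstopped T le_rfl] at hleast
  exact ⟨tendsto_const_nhds.congr' ((eventually_ge_atTop T).mono fun t ht => (hstopped t ht).symm),
    hleast.csInf_eq⟩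
end

section
/- Consider two cars driving toward each other with speeds v_1 ≥ 0 and |v_2| ≥ 0, response time ρ > 0, acceleration bound a_acc > 0 and braking rates b_1, b_2 > 0. Car 1 travels at most D_1 = ((v_1 + v_{1,ρ})/2)·ρ + v_{1,ρ}²/(2·b_1) before stopping, where v_{1,ρ} = v_1 + ρ·a_acc; car 2 travels at most D_2 = ((|v_2| + v_{2,ρ})/2)·ρ + v_{2,ρ}²/(2·b_2) where v_{2,ρ} = |v_2| + ρ·a_acc. If the initial distance between them exceeds D_1 + D_2, then at every time the sum of the distances traveled by the two cars is strictly less than the initial distance, so they do not collide. -/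
/-!
A car's speed is continuous and nonnegative, and it vanishes from the stopping time
`T = ρ + v_ρ / b` on, so the distance it has travelled by any time `t ≥ 0` is at most the
distance travelled by time `T`. That distance is exactly `D = (v + v_ρ) ρ / 2 + v_ρ² / (2 b)`:
the area of the trapezoid under the acceleration phase plus the triangle under the braking phase.
Adding the bounds for the two cars gives the claim.
-/

open Set intervalIntegral

theorem integral_const_add_mul (c m x y : ℝ) :
    ∫ s in x..y, (c + m * s) = c * (y - x) + m * (y ^ 2 - x ^ 2) / 2 := by
  rw [integral_add intervalIntegrable_const (intervalIntegrable_id.const_mul m),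
    intervalIntegral.integral_const_mul, integral_const, integral_id, smul_eq_mul]
  ring

noncomputable section

namespace Car

def brakingSpeed (v ρ a b t : ℝ) : ℝ :=
  if t ≤ ρ then v + a * t else max 0 (v + ρ * a - b * (t - ρ))

def stopTime (v ρ a b : ℝ) : ℝ := ρ + (v + ρ * a) / b

def stoppingDistance (v ρ a b : ℝ) : ℝ :=
  ((v + (v + ρ * a)) / 2) * ρ + (v + ρ * a) ^ 2 / (2 * b)

variable {v ρ a b t : ℝ}

theorem continuous_brakingSpeed (hw : 0 ≤ v + ρ * a) : Continuous (brakingSpeed v ρ a b) := by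
  refine Continuous.if_le (by fun_prop) (by fun_prop) continuous_id continuous_const ?_
  rintro t rfl
  rw [sub_self, mul_zero, sub_zero, max_eq_right hw, mul_comm]

theorem brakingSpeed_nonneg (hv : 0 ≤ v) (ha : 0 ≤ a) (ht : 0 ≤ t) :
    0 ≤ brakingSpeed v ρ a b t := by
  unfold brakingSpeed
  split_ifs
  · positivity
  · exact le_max_left _ _

theorem brakingSpeed_of_stopTime_le (hw : 0 < v + ρ * a) (hb : 0 < b)
    (ht : stopTime v ρ a b ≤ t) : brakingSpeed v ρ a b t = 0 := by
  have hρt : ρ < t := (lt_add_of_pos_right ρ (div_pos hw hb)).trans_le ht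
  have hstopped : v + ρ * a - b * (t - ρ) ≤ 0 :=
    sub_nonpos.2 ((div_le_iff₀' hb).1 (le_sub_iff_add_le'.2 ht))
  simp only [brakingSpeed, if_neg hρt.not_ge, max_eq_left hstopped]

theorem integral_brakingSpeed_stopTime (hρ : 0 ≤ ρ) (hw : 0 ≤ v + ρ * a) (hb : 0 < b) :
    ∫ s in (0 : ℝ)..stopTime v ρ a b, brakingSpeed v ρ a b s = stoppingDistance v ρ a b := by
  have hρT : ρ ≤ stopTime v ρ a b := le_add_of_nonneg_right (div_nonneg hw hb.le)
  have hint : ∀ x y, IntervalIntegrable (brakingSpeed v ρ a b) MeasureTheory.volume x y :=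
    (continuous_brakingSpeed hw).intervalIntegrable
  rw [← integral_add_adjacent_intervals (hint 0 ρ) (hint ρ _)]
  have haccelerating :
      ∫ s in (0 : ℝ)..ρ, brakingSpeed v ρ a b s = ∫ s in (0 : ℝ)..ρ, (v + a * s) := by
    refine integral_congr fun s hs => ?_
    rw [uIcc_of_le hρ] at hs
    simp only [brakingSpeed, if_pos hs.2]
  have hbraking : ∫ s in ρ..stopTime v ρ a b, brakingSpeed v ρ a b s
      = ∫ s in ρ..stopTime v ρ a b, ((v + ρ * a + b * ρ) + -b * s) := by
    refine integral_congr fun s hs => ?_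
    rw [uIcc_of_le hρT] at hs
    rcases hs.1.eq_or_lt with rfl | hρs
    · simp only [brakingSpeed, if_pos le_rfl]
      ring
    · have hmoving : b * (s - ρ) ≤ v + ρ * a :=
        (le_div_iff₀' hb).1 (sub_le_iff_le_add'.2 hs.2)
      simp only [brakingSpeed, if_neg hρs.not_ge, max_eq_right (sub_nonneg.2 hmoving)]
      ring
  rw [haccelerating, hbraking, integral_const_add_mul, integral_const_add_mul, stopTime,
    stoppingDistance]
  field_simp
  ring

theorem integral_brakingSpeed_le_stoppingDistance (hv : 0 ≤ v) (hρ : 0 < ρ) (ha : 0 < a)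
    (hb : 0 < b) (ht : 0 ≤ t) :
    ∫ s in (0 : ℝ)..t, brakingSpeed v ρ a b s ≤ stoppingDistance v ρ a b := by
  have hw : 0 < v + ρ * a := by positivity
  have hint : ∀ x y, IntervalIntegrable (brakingSpeed v ρ a b) MeasureTheory.volume x y :=
    (continuous_brakingSpeed hw.le).intervalIntegrable
  rw [← integral_brakingSpeed_stopTime hρ.le hw.le hb]
  rcases le_total t (stopTime v ρ a b) with htT | hTt
  · refine integral_mono_interval le_rfl ht htT ?_ (hint _ _)
    filter_upwards [MeasureTheory.ae_restrict_mem measurableSet_Ioc] with s hs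
    exact brakingSpeed_nonneg hv ha.le hs.1.le
  · have hstopped : ∫ s in stopTime v ρ a b..t, brakingSpeed v ρ a b s = 0 := by
      rw [integral_congr (g := fun _ => 0) fun s hs => ?_, integral_zero]
      rw [uIcc_of_le hTt] at hs
      exact brakingSpeed_of_stopTime_le hw hb hs.1
    rw [← integral_add_adjacent_intervals (hint _ _) (hint _ t), hstopped, add_zero]

end Car

end

/-- Two cars driving toward each other: if the initial gap exceeds the sum of the two
worst-case stopping distances, then at every time the sum of distances traveled is
strictly less than the initial gap, so no collision occurs. -/
theorem opposite_directions_no_collision (v₁ v₂ ρ a_acc b₁ b₂ d : ℝ)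
    (hv1 : 0 ≤ v₁) (hv2 : 0 ≤ v₂) (hρ : 0 < ρ) (hacc : 0 < a_acc)
    (hb1 : 0 < b₁) (hb2 : 0 < b₂)
    (vel₁ vel₂ : ℝ → ℝ) (dist₁ dist₂ : ℝ → ℝ)
    (hvel1 : vel₁ = fun t => if t ≤ ρ then v₁ + a_acc * t
        else max 0 (v₁ + ρ * a_acc - b₁ * (t - ρ)))
    (hvel2 : vel₂ = fun t => if t ≤ ρ then v₂ + a_acc * t
        else max 0 (v₂ + ρ * a_acc - b₂ * (t - ρ)))
    (hd1 : dist₁ = fun t => ∫ s in (0:ℝ)..t, vel₁ s)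
    (hd2 : dist₂ = fun t => ∫ s in (0:ℝ)..t, vel₂ s)
    (hgap : d > ((v₁ + (v₁ + ρ * a_acc)) / 2) * ρ + (v₁ + ρ * a_acc) ^ 2 / (2 * b₁)
        + ((v₂ + (v₂ + ρ * a_acc)) / 2) * ρ + (v₂ + ρ * a_acc) ^ 2 / (2 * b₂)) :
    ∀ t, 0 ≤ t → dist₁ t + dist₂ t < d := by
  intro t ht
  subst hvel1 hvel2 hd1 hd2
  calc _ ≤ Car.stoppingDistance v₁ ρ a_acc b₁ + Car.stoppingDistance v₂ ρ a_acc b₂ :=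
        add_le_add (Car.integral_brakingSpeed_le_stoppingDistance hv1 hρ hacc hb1 ht)
          (Car.integral_brakingSpeed_le_stoppingDistance hv2 hρ hacc hb2 ht)
    _ < d := by
        unfold Car.stoppingDistance
        linarith
end

section
/- Let r : [Y_min, Y_max] → ℝ² be a smooth unit-speed curve composed of finitely many pieces, each a line segment or a circular arc, with normal unit vector r⊥(Y) at each Y, and let w : [Y_min, Y_max] → ℝ₊ be a continuous width function. Assume that on every arc piece of radius ρ, the width satisfies w ≤ ρ/2. Then the map Φ : [Y_min, Y_max] × [−1/2, 1/2] → ℝ², Φ(Y, α) = r(Y) + α·w(Y)·r⊥(Y), is injective; equivalently, every point of the lane region R = Φ([Y_min,Y_max]×[−1/2,1/2]) has a unique representation (Y, α). -/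
open Real Set

/-- Lane-based coordinates are well defined: for a single circular-arc lane of radius `ρ`
(unit-speed parametrization) with constant width `w ≤ ρ/2`, subtending an angle less than
`2π`, the map `(Y, α) ↦ r(Y) + α·w·r⊥(Y)` is injective on `[Y_min, Y_max] × [-1/2, 1/2]`. -/
theorem lane_coordinates_injective (ρ w Ymin Ymax : ℝ)
    (hρ : 0 < ρ) (hw : 0 < w) (hwρ : w ≤ ρ / 2)
    (hY : Ymin ≤ Ymax) (hangle : Ymax - Ymin < 2 * π * ρ)
    (Φ : ℝ × ℝ → ℝ × ℝ)
    (hΦ : Φ = fun q => ((ρ - q.2 * w) * Real.cos (q.1 / ρ),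
        (ρ - q.2 * w) * Real.sin (q.1 / ρ))) :
    InjOn Φ (Icc Ymin Ymax ×ˢ Icc (-(1:ℝ)/2) (1/2)) := by
  subst hΦ
  rintro ⟨Y, a⟩ ⟨⟨hY1, hY2⟩, ha1, ha2⟩ ⟨Y', a'⟩ ⟨⟨hY1', hY2'⟩, ha1', ha2'⟩ h
  simp only [Prod.mk.injEq] at h
  obtain ⟨h1, h2⟩ := h
  simp only [mem_Icc] at *
  have hπ := Real.pi_pos
  have hr : (0:ℝ) < ρ - a * w := by nlinarith
  have hr' : (0:ℝ) < ρ - a' * w := by nlinarith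
  have c1 := Real.sin_sq_add_cos_sq (Y / ρ)
  have c2 := Real.sin_sq_add_cos_sq (Y' / ρ)
  have hsq : (ρ - a * w) ^ 2 = (ρ - a' * w) ^ 2 := by
    linear_combination ((ρ - a * w) * Real.cos (Y / ρ) + (ρ - a' * w) * Real.cos (Y' / ρ)) * h1 +
      ((ρ - a * w) * Real.sin (Y / ρ) + (ρ - a' * w) * Real.sin (Y' / ρ)) * h2 -
      (ρ - a * w) ^ 2 * c1 + (ρ - a' * w) ^ 2 * c2
  have hreq : ρ - a * w = ρ - a' * w := by nlinarith
  have haa : a = a' := by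
    have hmm : a * w = a' * w := by linarith
    exact mul_right_cancel₀ (ne_of_gt hw) hmm
  rw [hreq] at h1 h2
  have hc := mul_left_cancel₀ (ne_of_gt hr') h1
  have hs := mul_left_cancel₀ (ne_of_gt hr') h2
  have hcos1 : Real.cos (Y / ρ - Y' / ρ) = 1 := by
    rw [Real.cos_sub, hc, hs]; linear_combination c2
  have key : Y / ρ - Y' / ρ = (Y - Y') / ρ := by ring
  rw [key] at hcos1
  have hb1 : -(2 * π) < (Y - Y') / ρ := by
    rw [lt_div_iff₀ hρ]; linarith
  have hb2 : (Y - Y') / ρ < 2 * π := by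
    rw [div_lt_iff₀ hρ]; linarith
  have hzero : (Y - Y') / ρ = 0 :=
    (Real.cos_eq_one_iff_of_lt_of_lt hb1 hb2).mp hcos1
  have hYY : Y = Y' := by
    have := (div_eq_zero_iff.mp hzero).resolve_right (ne_of_gt hρ)
    linarith
  exact Prod.ext hYY haa
end
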